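/- arXiv:2403.11117 — 3 statements merged into one kernel-verified Lean document; each statement's English description precedes it below -/
import Mathlib

section
/- Let X be exponentially distributed with mean Ω_u > 0, let Y have the Gamma distribution of shape parameter α+1 > 0 and scale parameter β > 0, with X and Y independent, and let κ > 0, ε > 0. Then, with P(ρ) := P( ρX/(κ²ρY² + 1) < ε ): (i) lim_{ρ→∞} P(ρ) = P( X < εκ²Y² ); (ii) 0 < P(X < εκ²Y²) < 1; and consequently (iii) lim_{ρ→∞} −log P(ρ) / log ρ = 0, i.e., the secrecy diversity order of the data signal is zero. -/
/-!
As `ρ → ∞` the outage event `ρX/(κ²ρY² + 1) < ε` is `X < εκ²Y² + ε/ρ`, which decreases to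
`X ≤ εκ²Y²`; since the law of `X` has no atoms and `X, Y` are independent, the boundary
`X = εκ²Y²` is null, so `P(ρ)` tends to the error floor `P(X < εκ²Y²)`. Both this event and
its complement contain a product event `{X ∈ s} ∩ {Y ∈ t}` of positive probability, so the floor
lies in `(0, 1)`, and then `-log P(ρ)` stays bounded while `log ρ → ∞`.
-/

open MeasureTheory ProbabilityTheory Real Filter Topology Set

instance gammaMeasure.instNullSingletonClass (a r : ℝ) :
    NullSingletonClass (gammaMeasure a r) :=
  ⟨fun x => withDensity_absolutelyContinuous _ _ (measure_singleton x)⟩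

lemma gammaMeasure_Ioo_pos {a r l u : ℝ} (ha : 0 < a) (hr : 0 < r) (hl : 0 ≤ l)
    (hlu : l < u) : 0 < gammaMeasure a r (Ioo l u) := by
  have hsupp : Ioo l u ⊆ Function.support (gammaPDF a r) ∩ Ioo l u := fun x hx =>
    ⟨(ENNReal.ofReal_pos.mpr (gammaPDFReal_pos ha hr (hl.trans_lt hx.1))).ne', hx⟩
  rw [gammaMeasure, withDensity_apply _ measurableSet_Ioo]
  refine (setLIntegral_pos_iff (f := gammaPDF a r)
    (measurable_gammaPDFReal a r).ennreal_ofReal).mpr ?_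
  exact (by simpa using hlu : 0 < volume (Ioo l u)).trans_le (measure_mono hsupp)

namespace ProbabilityTheory.IndepFun

variable {Ω : Type*} [MeasurableSpace Ω] {μ : Measure Ω} {X Y : Ω → ℝ}

lemma measure_eq_comp_eq_zero [IsFiniteMeasure μ] (hInd : IndepFun X Y μ)
    (hXm : Measurable X) (hYm : Measurable Y) [NullSingletonClass (μ.map X)] {g : ℝ → ℝ} (hg : Measurable g) :
    μ {ω | X ω = g (Y ω)} = 0 := by
  have hS : MeasurableSet {p : ℝ × ℝ | p.1 = g p.2} :=
    measurableSet_eq_fun measurable_fst (hg.comp measurable_snd)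
  have hprod : μ.map (fun ω => (X ω, Y ω)) = (μ.map X).prod (μ.map Y) :=
    (indepFun_iff_map_prod_eq_prod_map_map hXm.aemeasurable hYm.aemeasurable).mp hInd
  change μ ((fun ω => (X ω, Y ω)) ⁻¹' {p : ℝ × ℝ | p.1 = g p.2}) = 0
  rw [← Measure.map_apply (hXm.prodMk hYm) hS, hprod, Measure.prod_apply_symm hS]
  simp

lemma measure_preimage_inter_pos (hInd : IndepFun X Y μ) (hXm : Measurable X)
    (hYm : Measurable Y) {s t : Set ℝ} (hs : MeasurableSet s) (ht : MeasurableSet t)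
    (hXs : 0 < μ.map X s) (hYt : 0 < μ.map Y t) : 0 < μ (X ⁻¹' s ∩ Y ⁻¹' t) := by
  rw [Measure.map_apply hXm hs] at hXs
  rw [Measure.map_apply hYm ht] at hYt
  rw [hInd.measure_inter_preimage_eq_mul _ _ hs ht]
  exact ENNReal.mul_pos hXs.ne' hYt.ne'

end ProbabilityTheory.IndepFun

lemma tendsto_measure_lt_add_nhdsGT {Ω : Type*} [MeasurableSpace Ω] (μ : Measure Ω)
    [IsFiniteMeasure μ] {f g : Ω → ℝ} (hf : Measurable f) (hg : Measurable g) :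
    Tendsto (fun δ => μ {ω | f ω < g ω + δ}) (𝓝[>] 0) (𝓝 (μ {ω | f ω ≤ g ω})) := by
  have hInter : ⋂ δ > (0 : ℝ), {ω | f ω < g ω + δ} = {ω | f ω ≤ g ω} := by
    ext ω
    simp only [mem_iInter, mem_ofPred_eq]
    exact ⟨le_of_forall_pos_lt_add, fun h δ hδ => by linarith⟩
  rw [← hInter]
  refine tendsto_measure_biInter_gt
    (fun δ _ => (measurableSet_lt hf (hg.add_const δ)).nullMeasurableSet) (fun δ δ' _ hδδ' ω hω => ?_) ⟨1, one_pos, measure_ne_top μ _⟩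
  simp only [mem_ofPred_eq] at hω ⊢
  linarith

lemma sinr_lt_iff {ρ κ ε x y : ℝ} (hρ : 0 < ρ) :
    ρ * x / (κ ^ 2 * ρ * y ^ 2 + 1) < ε ↔ x < ε * κ ^ 2 * y ^ 2 + ε / ρ := by
  have hre : ε * (κ ^ 2 * ρ * y ^ 2 + 1) = ρ * (ε * κ ^ 2 * y ^ 2 + ε / ρ) := by
    field_simp
  rw [div_lt_iff₀ (by positivity), hre, mul_lt_mul_iff_right₀ hρ]

lemma tendsto_measure_sinr_lt {Ω : Type*} [MeasurableSpace Ω] (μ : Measure Ω)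
    [IsFiniteMeasure μ] {X Y : Ω → ℝ} (hXm : Measurable X) (hYm : Measurable Y) (κ : ℝ)
    {ε : ℝ} (hε : 0 < ε) (hnull : μ {ω | X ω = ε * κ ^ 2 * Y ω ^ 2} = 0) :
    Tendsto (fun ρ : ℝ => μ {ω | ρ * X ω / (κ ^ 2 * ρ * Y ω ^ 2 + 1) < ε}) atTop
      (𝓝 (μ {ω | X ω < ε * κ ^ 2 * Y ω ^ 2})) := by
  have hle : μ {ω | X ω ≤ ε * κ ^ 2 * Y ω ^ 2} = μ {ω | X ω < ε * κ ^ 2 * Y ω ^ 2} := by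
    refine measure_congr ?_
    filter_upwards [measure_eq_zero_iff_ae_notMem.mp hnull] with ω hω
    change (X ω ≤ _) = (X ω < _)
    exact propext (le_iff_lt_or_eq.trans (or_iff_left hω))
  have hδ : Tendsto (fun ρ : ℝ => ε / ρ) atTop (𝓝[>] 0) :=
    tendsto_nhdsWithin_iff.mpr ⟨tendsto_const_nhds.div_atTop tendsto_id,
      eventually_gt_atTop 0 |>.mono fun ρ hρ => div_pos hε hρ⟩
  have hlim := (tendsto_measure_lt_add_nhdsGT μ hXm
    (((hYm.pow_const 2).const_mul (ε * κ ^ 2)))).comp hδ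
  rw [hle] at hlim
  refine hlim.congr' ?_
  filter_upwards [eventually_gt_atTop 0] with ρ hρ
  simp only [Function.comp_apply, sinr_lt_iff hρ]

lemma tendsto_neg_log_div_log_of_tendsto {f : ℝ → ℝ} {p : ℝ} (hf : Tendsto f atTop (𝓝 p))
    (hp : p ≠ 0) : Tendsto (fun ρ => -Real.log (f ρ) / Real.log ρ) atTop (𝓝 0) := by
  simpa [div_eq_mul_inv] using
    (hf.log hp).neg.mul (tendsto_inv_atTop_zero.comp Real.tendsto_log_atTop)

section ErrorFloor

variable {Ω : Type*} [MeasurableSpace Ω] {μ : Measure Ω} {X Y : Ω → ℝ} {a r r' c : ℝ}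

lemma measure_lt_mul_sq_pos (hXm : Measurable X) (hYm : Measurable Y) (hInd : IndepFun X Y μ)
    (hX : μ.map X = expMeasure r') (hY : μ.map Y = gammaMeasure a r) (ha : 0 < a) (hr : 0 < r)
    (hr' : 0 < r') (hc : 0 < c) : 0 < μ {ω | X ω < c * Y ω ^ 2} := by
  refine (hInd.measure_preimage_inter_pos hXm hYm (s := Iio c) (t := Ioi 1) measurableSet_Iio
    measurableSet_Ioi ?_ ?_).trans_le (measure_mono fun ω ⟨hXω, hYω⟩ => ?_)
  · rw [hX]
    exact (gammaMeasure_Ioo_pos one_pos hr' le_rfl hc).trans_le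
      (measure_mono Ioo_subset_Iio_self)
  · rw [hY]
    exact (gammaMeasure_Ioo_pos ha hr zero_le_one one_lt_two).trans_le
      (measure_mono Ioo_subset_Ioi_self)
  · simp only [mem_preimage, mem_Iio, mem_Ioi, mem_ofPred_eq] at hXω hYω ⊢
    nlinarith [one_lt_pow₀ hYω two_ne_zero]

lemma measure_lt_mul_sq_lt_one [IsProbabilityMeasure μ] (hXm : Measurable X) (hYm : Measurable Y)
    (hInd : IndepFun X Y μ) (hX : μ.map X = expMeasure r') (hY : μ.map Y = gammaMeasure a r)
    (ha : 0 < a) (hr : 0 < r) (hr' : 0 < r') (hc : 0 < c) :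
    μ {ω | X ω < c * Y ω ^ 2} < 1 := by
  have hE : MeasurableSet {ω | X ω < c * Y ω ^ 2} :=
    measurableSet_lt hXm ((hYm.pow_const 2).const_mul c)
  have hcompl : 0 < μ {ω | X ω < c * Y ω ^ 2}ᶜ := by
    refine (hInd.measure_preimage_inter_pos hXm hYm (s := Ioi c) (t := Ioo 0 1)
      measurableSet_Ioi measurableSet_Ioo ?_ ?_).trans_le (measure_mono fun ω ⟨hXω, hYω⟩ => ?_)
    · rw [hX]
      exact (gammaMeasure_Ioo_pos one_pos hr' hc.le (lt_add_one c)).trans_le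
        (measure_mono Ioo_subset_Ioi_self)
    · rw [hY]
      exact gammaMeasure_Ioo_pos ha hr le_rfl zero_lt_one
    · simp only [mem_preimage, mem_Ioi, mem_Ioo, mem_compl_iff, mem_ofPred_eq, not_lt]
        at hXω hYω ⊢
      nlinarith [pow_lt_one₀ hYω.1.le hYω.2 two_ne_zero]
  exact prob_le_one.lt_of_ne fun h => hcompl.ne' ((prob_compl_eq_zero_iff hE).mpr h)

end ErrorFloor

/-- Remark 1: with `X` exponential of mean `Ωu` (direct link power gain) and
`Y` Gamma(α+1, scale β) (cascaded RIS gain), independent, the secrecy outage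
probability `P(ρ) = P(ρX/(κ²ρY² + 1) < ε)` of the data signal converges, as the
transmit SNR `ρ → ∞`, to the error floor `P(X < εκ²Y²) ∈ (0, 1)`; hence the
secrecy diversity order `lim_{ρ→∞} -log P(ρ)/log ρ` equals zero. -/
theorem secrecy_diversity_order_data_zero
    {Ω' : Type*} [MeasurableSpace Ω'] (μ : Measure Ω') [IsProbabilityMeasure μ]
    (X Y : Ω' → ℝ) (hXm : Measurable X) (hYm : Measurable Y)
    (α β Ωu : ℝ) (hα : 0 < α + 1) (hβ : 0 < β) (hΩu : 0 < Ωu)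
    (hX : μ.map X = expMeasure Ωu⁻¹)
    (hY : μ.map Y = gammaMeasure (α + 1) β⁻¹)
    (hInd : IndepFun X Y μ)
    (κ ε : ℝ) (hκ : 0 < κ) (hε : 0 < ε) :
    Tendsto (fun ρ : ℝ =>
        (μ {ω | ρ * X ω / (κ ^ 2 * ρ * (Y ω) ^ 2 + 1) < ε}).toReal) atTop
      (nhds ((μ {ω | X ω < ε * κ ^ 2 * (Y ω) ^ 2}).toReal)) ∧
    (0 < (μ {ω | X ω < ε * κ ^ 2 * (Y ω) ^ 2}).toReal ∧
      (μ {ω | X ω < ε * κ ^ 2 * (Y ω) ^ 2}).toReal < 1) ∧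
    Tendsto (fun ρ : ℝ =>
        -Real.log ((μ {ω | ρ * X ω / (κ ^ 2 * ρ * (Y ω) ^ 2 + 1) < ε}).toReal) /
          Real.log ρ) atTop (nhds 0) := by
  have hc : 0 < ε * κ ^ 2 := by positivity
  have : NullSingletonClass (μ.map X) := hX ▸ gammaMeasure.instNullSingletonClass _ _
  have hnull := hInd.measure_eq_comp_eq_zero hXm hYm
    ((measurable_id.pow_const 2).const_mul (ε * κ ^ 2))
  have hlim := (ENNReal.tendsto_toReal (measure_ne_top μ _)).comp
    (tendsto_measure_sinr_lt μ hXm hYm κ hε hnull)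
  have hpos := measure_lt_mul_sq_pos hXm hYm hInd hX hY hα (inv_pos.mpr hβ) (inv_pos.mpr hΩu) hc
  have hlt := measure_lt_mul_sq_lt_one hXm hYm hInd hX hY hα (inv_pos.mpr hβ)
    (inv_pos.mpr hΩu) hc
  have hpos' : 0 < (μ {ω | X ω < ε * κ ^ 2 * Y ω ^ 2}).toReal :=
    ENNReal.toReal_pos hpos.ne' (measure_ne_top μ _)
  exact ⟨hlim, ⟨hpos', ENNReal.toReal_lt_of_lt_ofReal (by simpa using hlt)⟩,
    tendsto_neg_log_div_log_of_tendsto hlim hpos'.ne'⟩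
end

section
/- Let X be exponentially distributed with mean Ω_ipu > 0, let Y have the Gamma distribution of shape parameter α+1 > 0 and scale parameter β > 0, with X and Y independent, and let κ > 0, ϖ > 0, c > 0. Then, with P(ρ) := P( κ²ρY²/(ϖρX + 1) < c ): (i) lim_{ρ→∞} P(ρ) = P( κ²Y² < c ϖ X ); (ii) 0 < P(κ²Y² < cϖX) < 1; and consequently (iii) lim_{ρ→∞} −log P(ρ) / log ρ = 0, i.e., the secrecy diversity order of the backscatter signal under imperfect SIC is zero. -/
/-!
Since `X ≥ 0` almost surely, for `ρ > 0` the event `κ²ρY²/(ϖρX + 1) < c` is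
`κ²Y² - cϖX < c/ρ`, which decreases to `κ²Y² ≤ cϖX` as `ρ → ∞`. The boundary `κ²Y² = cϖX` is
null, since for each value of `Y` it is a single point for the atomless law of `X`; so `P(ρ)`
tends to the floor `P(κ²Y² < cϖX)`. The floor lies strictly between `0` and `1` because this open
set and the one with the inequality reversed both meet the open positive quadrant, where the
product of the two Gamma densities is positive. A positive limit keeps `-log P(ρ)` bounded while
`log ρ → ∞`, so the diversity order is `0`.
-/

open MeasureTheory ProbabilityTheory Real Filter Topology

section

variable {Ω : Type*} [MeasurableSpace Ω]

open Set in
theorem MeasureTheory.tendsto_measure_setOf_lt_nhdsGT (μ : Measure Ω) [IsFiniteMeasure μ]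
    {Z : Ω → ℝ} (hZ : Measurable Z) (a : ℝ) :
    Tendsto (fun t => μ {ω | Z ω < t}) (𝓝[>] a) (𝓝 (μ {ω | Z ω ≤ a})) := by
  have hinter : (⋂ t > a, {ω | Z ω < t}) = {ω | Z ω ≤ a} := by
    ext ω
    simp only [mem_iInter, mem_ofPred_eq]
    exact ⟨fun h => forall_gt_iff_le.mp h, fun h t ht => h.trans_lt ht⟩
  rw [← hinter]
  exact tendsto_measure_biInter_gt
    (fun t _ => (measurableSet_lt hZ measurable_const).nullMeasurableSet)
    (fun s t _ hst ω hω => lt_of_lt_of_le hω hst) ⟨a + 1, by linarith, measure_ne_top μ _⟩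

theorem MeasureTheory.measure_setOf_le_eq_measure_setOf_lt {μ : Measure Ω} {Z : Ω → ℝ} {a : ℝ}
    (h : μ {ω | Z ω = a} = 0) :
    μ {ω | Z ω ≤ a} = μ {ω | Z ω < a} := by
  have hne : ∀ᵐ ω ∂μ, Z ω ≠ a := ae_iff.mpr (by simpa only [not_not] using h)
  exact measure_congr (hne.mono fun ω hω => propext ⟨fun hle => hle.lt_of_ne hω, le_of_lt⟩)

theorem sinr_lt_iff_sub_lt_div {a b c ρ x y : ℝ} (hρ : 0 < ρ) (hb : 0 ≤ b) (hx : 0 ≤ x) :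
    a * ρ * y / (b * ρ * x + 1) < c ↔ a * y - c * b * x < c / ρ := by
  have hden : 0 < b * ρ * x + 1 := by positivity
  rw [div_lt_iff₀ hden, lt_div_iff₀ hρ]
  constructor <;> intro h <;> linarith

theorem tendsto_measure_sinr_lt_atTop (μ : Measure Ω) [IsFiniteMeasure μ] {X V : Ω → ℝ}
    (hX : Measurable X) (hV : Measurable V) (hX0 : ∀ᵐ ω ∂μ, 0 ≤ X ω) {a b c : ℝ} (hb : 0 ≤ b)
    (hc : 0 < c) (hboundary : μ {ω | a * V ω - c * b * X ω = 0} = 0) :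
    Tendsto (fun ρ => μ {ω | a * ρ * V ω / (b * ρ * X ω + 1) < c}) atTop
      (𝓝 (μ {ω | a * V ω < c * b * X ω})) := by
  have hsinr : ∀ᶠ ρ in atTop, μ {ω | a * V ω - c * b * X ω < c / ρ} =
      μ {ω | a * ρ * V ω / (b * ρ * X ω + 1) < c} := by
    filter_upwards [eventually_gt_atTop 0] with ρ hρ
    exact measure_congr (hX0.mono fun ω hx => propext (sinr_lt_iff_sub_lt_div hρ hb hx).symm)
  have hc_div : Tendsto (fun ρ : ℝ => c / ρ) atTop (𝓝[>] 0) :=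
    tendsto_nhdsWithin_iff.mpr ⟨tendsto_const_nhds.div_atTop tendsto_id,
      (eventually_gt_atTop 0).mono fun ρ hρ => div_pos hc hρ⟩
  have hlim := ((tendsto_measure_setOf_lt_nhdsGT μ (by fun_prop) 0).comp hc_div).congr' hsinr
  simpa only [measure_setOf_le_eq_measure_setOf_lt hboundary, sub_neg] using hlim

end

theorem MeasureTheory.Measure.prod_null_of_countable_fiber {α β : Type*} [MeasurableSpace α]
    [MeasurableSpace β] (μ : Measure α) (ν : Measure β) [NullSingletonClass μ] [SFinite μ]
    [SFinite ν] {s : Set (α × β)} (hs : MeasurableSet s) (h : ∀ y, {x | (x, y) ∈ s}.Countable) :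
    μ.prod ν s = 0 := by
  rw [Measure.prod_apply_symm hs]
  exact (lintegral_congr fun y => (h y).measure_zero μ).trans lintegral_zero

theorem MeasureTheory.Measure.prod_setOf_sub_mul_fst_eq_zero {β : Type*} [MeasurableSpace β]
    (μ : Measure ℝ) (ν : Measure β) [NullSingletonClass μ] [SFinite μ] [SFinite ν] {f : β → ℝ}
    (hf : Measurable f) {d : ℝ} (hd : d ≠ 0) : μ.prod ν {p | f p.2 - d * p.1 = 0} = 0 := by
  refine prod_null_of_countable_fiber μ ν (measurableSet_eq_fun (by fun_prop) (by fun_prop))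
    fun y => Set.Subsingleton.countable fun x₁ h₁ x₂ h₂ => ?_
  simp only [Set.mem_ofPred_eq] at h₁ h₂
  exact mul_left_cancel₀ hd (by linarith)

namespace ProbabilityTheory

instance (a r : ℝ) : NullSingletonClass (gammaMeasure a r) :=
  inferInstanceAs (NullSingletonClass (volume.withDensity _))

instance (a r : ℝ) : SFinite (gammaMeasure a r) :=
  inferInstanceAs (SFinite (volume.withDensity _))

theorem ae_gammaMeasure_nonneg (a r : ℝ) : ∀ᵐ x ∂gammaMeasure a r, 0 ≤ x := by
  simp only [ae_iff, not_le]
  exact (withDensity_apply _ measurableSet_Iio).trans (lintegral_gammaPDF_of_nonpos le_rfl)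

theorem gammaMeasure_pos_of_subset_Ioi {a r : ℝ} (ha : 0 < a) (hr : 0 < r) {s : Set ℝ}
    (hs : s ⊆ Set.Ioi 0) (hvol : volume s ≠ 0) : 0 < gammaMeasure a r s := by
  have hsupp : {x | gammaPDF a r x ≠ 0} ∩ s = s :=
    Set.inter_eq_right.mpr fun x hx =>
      ENNReal.ofReal_pos.mpr (gammaPDFReal_pos ha hr (hs hx)) |>.ne'
  have hmeas : Measurable (gammaPDF a r) := (measurable_gammaPDFReal a r).ennreal_ofReal
  rw [pos_iff_ne_zero, gammaMeasure, Ne, withDensity_apply_eq_zero hmeas, hsupp]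
  exact hvol

theorem prod_gammaMeasure_pos_of_isOpen {a r a' r' : ℝ} (ha : 0 < a) (hr : 0 < r)
    (ha' : 0 < a') (hr' : 0 < r') {B : Set (ℝ × ℝ)} (hB : IsOpen B)
    (hne : (B ∩ Set.Ioi 0 ×ˢ Set.Ioi 0).Nonempty) :
    0 < (gammaMeasure a r).prod (gammaMeasure a' r') B := by
  obtain ⟨⟨x, y⟩, hxy⟩ := hne
  obtain ⟨u, v, hu, hv, hxu, hyv, huv⟩ :=
    isOpen_prod_iff.mp (hB.inter (isOpen_Ioi.prod isOpen_Ioi)) x y hxy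
  have hu0 : u ⊆ Set.Ioi 0 := fun x' hx' => (huv (Set.mk_mem_prod hx' hyv)).2.1
  have hv0 : v ⊆ Set.Ioi 0 := fun y' hy' => (huv (Set.mk_mem_prod hxu hy')).2.2
  calc 0 < gammaMeasure a r u * gammaMeasure a' r' v :=
        ENNReal.mul_pos
          (gammaMeasure_pos_of_subset_Ioi ha hr hu0 (hu.measure_pos _ ⟨x, hxu⟩).ne').ne'
          (gammaMeasure_pos_of_subset_Ioi ha' hr' hv0 (hv.measure_pos _ ⟨y, hyv⟩).ne').ne'
    _ = (gammaMeasure a r).prod (gammaMeasure a' r') (u ×ˢ v) := (Measure.prod_prod u v).symm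
    _ ≤ _ := measure_mono fun p hp => (huv hp).1

theorem prod_gammaMeasure_setOf_mul_sq_lt_mem_Ioo {a r a' r' k d : ℝ} (ha : 0 < a) (hr : 0 < r)
    (ha' : 0 < a') (hr' : 0 < r') (hk : 0 < k) (hd : 0 < d) :
    (gammaMeasure a r).prod (gammaMeasure a' r') {p | k * p.2 ^ 2 < d * p.1} ∈ Set.Ioo 0 1 := by
  have := isProbabilityMeasure_gammaMeasure ha hr
  have := isProbabilityMeasure_gammaMeasure ha' hr'
  have hkd : d * (k / d) = k := mul_div_cancel₀ _ hd.ne'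
  -- `(k / d, 1)` lies on the curve `k y² = d x`; `y = 1/2` and `y = 2` fall on either side of it.
  have hquad {y : ℝ} (hy : 0 < y) : (k / d, y) ∈ Set.Ioi 0 ×ˢ Set.Ioi 0 :=
    ⟨Set.mem_Ioi.mpr (div_pos hk hd), hy⟩
  have hT : IsOpen {p : ℝ × ℝ | d * p.1 < k * p.2 ^ 2} := isOpen_lt (by fun_prop) (by fun_prop)
  have hTpos := prod_gammaMeasure_pos_of_isOpen ha hr ha' hr' hT
    ⟨(k / d, 2), by simp only [Set.mem_ofPred_eq, hkd]; nlinarith, hquad two_pos⟩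
  refine ⟨prod_gammaMeasure_pos_of_isOpen ha hr ha' hr' (isOpen_lt (by fun_prop) (by fun_prop))
    ⟨(k / d, 1 / 2), by simp only [Set.mem_ofPred_eq, hkd]; nlinarith, hquad one_half_pos⟩, ?_⟩
  calc _ ≤ (gammaMeasure a r).prod (gammaMeasure a' r') {p | d * p.1 < k * p.2 ^ 2}ᶜ :=
        measure_mono fun _ h => Set.notMem_ofPred_iff.mpr (lt_asymm h)
    _ < 1 := by simpa using prob_compl_lt_one_sub_of_lt_prob hTpos hT.measurableSet

end ProbabilityTheory

theorem Real.tendsto_neg_log_div_log_atTop {f : ℝ → ℝ} {L : ℝ} (hf : Tendsto f atTop (𝓝 L))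
    (hL : L ≠ 0) : Tendsto (fun ρ => -log (f ρ) / log ρ) atTop (𝓝 0) :=
  (((continuousAt_log hL).tendsto.comp hf).neg).div_atTop tendsto_log_atTop

theorem ProbabilityTheory.IndepFun.measure_pair_mem {Ω α β : Type*} [MeasurableSpace Ω]
    [MeasurableSpace α] [MeasurableSpace β] {μ : Measure Ω} [IsFiniteMeasure μ] {X : Ω → α}
    {Y : Ω → β} (hInd : IndepFun X Y μ) (hX : Measurable X) (hY : Measurable Y)
    {B : Set (α × β)} (hB : MeasurableSet B) :
    μ {ω | (X ω, Y ω) ∈ B} = (μ.map X).prod (μ.map Y) B := by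
  rw [← (indepFun_iff_map_prod_eq_prod_map_map hX.aemeasurable hY.aemeasurable).mp hInd,
    Measure.map_apply (hX.prodMk hY) hB]
  rfl

/-- Remark 2 (first part): with `X` exponential of mean `Ωipu` (residual interference
power of imperfect SIC) and `Y` Gamma(α+1, scale β) (cascaded RIS gain), independent,
the secrecy outage probability `P(ρ) = P(κ²ρY²/(ϖρX + 1) < c)` of the backscatter
signal converges, as the transmit SNR `ρ → ∞`, to the error floor
`P(κ²Y² < cϖX) ∈ (0, 1)`; hence the secrecy diversity order
`lim_{ρ→∞} -log P(ρ)/log ρ` equals zero. -/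
theorem secrecy_diversity_order_backscatter_ipSIC_zero
    {Ω' : Type*} [MeasurableSpace Ω'] (μ : Measure Ω') [IsProbabilityMeasure μ]
    (X Y : Ω' → ℝ) (hXm : Measurable X) (hYm : Measurable Y)
    (α β Ωipu : ℝ) (hα : 0 < α + 1) (hβ : 0 < β) (hΩipu : 0 < Ωipu)
    (hX : μ.map X = expMeasure Ωipu⁻¹)
    (hY : μ.map Y = gammaMeasure (α + 1) β⁻¹)
    (hInd : IndepFun X Y μ)
    (κ ϖ c : ℝ) (hκ : 0 < κ) (hϖ : 0 < ϖ) (hc : 0 < c) :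
    Tendsto (fun ρ : ℝ =>
        (μ {ω | κ ^ 2 * ρ * (Y ω) ^ 2 / (ϖ * ρ * X ω + 1) < c}).toReal) atTop
      (nhds ((μ {ω | κ ^ 2 * (Y ω) ^ 2 < c * ϖ * X ω}).toReal)) ∧
    (0 < (μ {ω | κ ^ 2 * (Y ω) ^ 2 < c * ϖ * X ω}).toReal ∧
      (μ {ω | κ ^ 2 * (Y ω) ^ 2 < c * ϖ * X ω}).toReal < 1) ∧
    Tendsto (fun ρ : ℝ =>
        -Real.log ((μ {ω | κ ^ 2 * ρ * (Y ω) ^ 2 / (ϖ * ρ * X ω + 1) < c}).toReal) /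
          Real.log ρ) atTop (nhds 0) := by
  have hr : 0 < Ωipu⁻¹ := inv_pos.mpr hΩipu
  have hb : 0 < β⁻¹ := inv_pos.mpr hβ
  have hcϖ : 0 < c * ϖ := mul_pos hc hϖ
  set ν := (gammaMeasure 1 Ωipu⁻¹).prod (gammaMeasure (α + 1) β⁻¹)
  have hlaw {B : Set (ℝ × ℝ)} (hB : MeasurableSet B) : μ {ω | (X ω, Y ω) ∈ B} = ν B := by
    rw [hInd.measure_pair_mem hXm hYm hB, hX, hY, expMeasure]
  have hX0 : ∀ᵐ ω ∂μ, 0 ≤ X ω := ae_of_ae_map hXm.aemeasurable (hX ▸ ae_gammaMeasure_nonneg _ _)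
  have hboundary : μ {ω | κ ^ 2 * Y ω ^ 2 - c * ϖ * X ω = 0} = 0 :=
    (hlaw (measurableSet_eq_fun (by fun_prop) (by fun_prop))).trans
      (Measure.prod_setOf_sub_mul_fst_eq_zero _ _ (f := fun y => κ ^ 2 * y ^ 2) (by fun_prop)
        hcϖ.ne')
  have hlim : Tendsto (fun ρ => μ {ω | κ ^ 2 * ρ * Y ω ^ 2 / (ϖ * ρ * X ω + 1) < c}) atTop
      (𝓝 (μ {ω | κ ^ 2 * Y ω ^ 2 < c * ϖ * X ω})) :=
    tendsto_measure_sinr_lt_atTop μ hXm (by fun_prop) hX0 hϖ.le hc hboundary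
  have hfloor : μ {ω | κ ^ 2 * Y ω ^ 2 < c * ϖ * X ω} ∈ Set.Ioo 0 1 :=
    Set.mem_of_eq_of_mem (hlaw (B := {p | κ ^ 2 * p.2 ^ 2 < c * ϖ * p.1})
      (measurableSet_lt (by fun_prop) (by fun_prop)))
      (prod_gammaMeasure_setOf_mul_sq_lt_mem_Ioo one_pos hr hα hb (pow_pos hκ 2) hcϖ)
  have hlim' := (ENNReal.tendsto_toReal (measure_ne_top _ _)).comp hlim
  have hpos := ENNReal.toReal_pos hfloor.1.ne' (measure_ne_top _ _)
  exact ⟨hlim', ⟨hpos, ENNReal.toReal_lt_of_lt_ofReal (by simpa using hfloor.2)⟩,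
    tendsto_neg_log_div_log_atTop hlim' hpos.ne'⟩
end

section
/- For all real s > 0 and c > 0, lim_{ρ→∞} −log( γ(s, c/√ρ) / Γ(s) ) / log ρ = s/2, where γ(s,u) = ∫₀^u t^{s−1} e^{−t} dt is the lower incomplete gamma function. In particular, taking s = α+1 with α+1 = π²M/(16 − π²) for a positive integer M, the secrecy diversity order of the backscatter signal with perfect SIC, whose secrecy outage probability at transmit SNR ρ equals γ(α+1, c/√ρ)/Γ(α+1), equals Mπ²/(2(16 − π²)). -/
open MeasureTheory Real Filter Topology

/-- The lower incomplete gamma function `γ(s, u) = ∫₀ᵘ t^(s-1) e^(-t) dt`. -/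
noncomputable def lowerGamma (s u : ℝ) : ℝ := ∫ t in (0:ℝ)..u, t ^ (s - 1) * Real.exp (-t)

/-!
Since `e^{-u} ≤ e^{-t} ≤ 1` on `[0, u]`, the integral `γ(s, u)` lies between `e^{-u} u^s/s` and
`u^s/s`, so `log γ(s, u) = s log u + O(1)` as `u → 0⁺`. With `u = c/√ρ` this gives
`-log (γ(s, c/√ρ)/Γ(s)) = (s/2) log ρ + O(1)`, and dividing by `log ρ` yields the limit `s/2`.
-/

theorem tendsto_div_log_of_abs_sub_mul_log_le {f : ℝ → ℝ} {a B : ℝ}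
    (hf : ∀ᶠ ρ in atTop, |f ρ - a * log ρ| ≤ B) :
    Tendsto (fun ρ => f ρ / log ρ) atTop (𝓝 a) := by
  have hdev : Tendsto (fun ρ => (f ρ - a * log ρ) / log ρ) atTop (𝓝 0) := by
    refine squeeze_zero_norm' ?_ ((tendsto_const_nhds (x := B)).div_atTop tendsto_log_atTop)
    filter_upwards [hf, eventually_gt_atTop 1] with ρ hρ hρ1
    rw [norm_div, Real.norm_eq_abs, Real.norm_eq_abs, abs_of_pos (log_pos hρ1)]
    exact div_le_div_of_nonneg_right hρ (log_pos hρ1).le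
  have hsum : Tendsto (fun ρ => a + (f ρ - a * log ρ) / log ρ) atTop (𝓝 a) := by
    simpa only [add_zero] using hdev.const_add a
  refine hsum.congr' ?_
  filter_upwards [eventually_gt_atTop 1] with ρ hρ1
  field_simp [(log_pos hρ1).ne']
  ring

section LowerGamma

variable {s u : ℝ}

theorem integral_rpow_sub_one (hs : 0 < s) (u : ℝ) : ∫ t in (0:ℝ)..u, t ^ (s - 1) = u ^ s / s := by
  rw [integral_rpow (Or.inl (by linarith)), sub_add_cancel, zero_rpow hs.ne', sub_zero]

theorem intervalIntegrable_rpow_sub_one_mul_exp_neg (hs : 0 < s) (hu : 0 ≤ u) :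
    IntervalIntegrable (fun t => t ^ (s - 1) * exp (-t)) volume 0 u := by
  rw [intervalIntegrable_iff_integrableOn_Ioc_of_le hu]
  simpa only [mul_comm] using (GammaIntegral_convergent hs).mono_set Set.Ioc_subset_Ioi_self

theorem lowerGamma_le_rpow_div (hs : 0 < s) (hu : 0 ≤ u) : lowerGamma s u ≤ u ^ s / s := by
  rw [← integral_rpow_sub_one hs]
  refine intervalIntegral.integral_mono_on hu (intervalIntegrable_rpow_sub_one_mul_exp_neg hs hu)
    (intervalIntegral.intervalIntegrable_rpow' (by linarith)) fun t ht => ?_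
  exact mul_le_of_le_one_right (rpow_nonneg ht.1 _) (exp_le_one_iff.2 (by linarith [ht.1]))

theorem exp_neg_mul_rpow_div_le_lowerGamma (hs : 0 < s) (hu : 0 ≤ u) :
    exp (-u) * (u ^ s / s) ≤ lowerGamma s u := by
  rw [← integral_rpow_sub_one hs, mul_comm, ← intervalIntegral.integral_mul_const]
  refine intervalIntegral.integral_mono_on hu
    ((intervalIntegral.intervalIntegrable_rpow' (by linarith)).mul_const _)
    (intervalIntegrable_rpow_sub_one_mul_exp_neg hs hu) fun t ht => ?_
  exact mul_le_mul_of_nonneg_left (exp_le_exp.2 (by linarith [ht.2])) (rpow_nonneg ht.1 _)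

theorem lowerGamma_pos (hs : 0 < s) (hu : 0 < u) : 0 < lowerGamma s u :=
  (by positivity : 0 < exp (-u) * (u ^ s / s)).trans_le
    (exp_neg_mul_rpow_div_le_lowerGamma hs hu.le)

theorem abs_log_lowerGamma_sub_le (hs : 0 < s) (hu : 0 < u) :
    |log (lowerGamma s u) - (s * log u - log s)| ≤ u := by
  have hlog : log (u ^ s / s) = s * log u - log s := by
    rw [log_div (rpow_pos_of_pos hu s).ne' hs.ne', log_rpow hu]
  have hupper := log_le_log (lowerGamma_pos hs hu) (lowerGamma_le_rpow_div hs hu.le)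
  have hlower := log_le_log (by positivity) (exp_neg_mul_rpow_div_le_lowerGamma hs hu.le)
  rw [log_mul (exp_pos _).ne' (by positivity), log_exp] at hlower
  rw [abs_le]
  constructor <;> linarith

end LowerGamma

theorem tendsto_neg_log_lowerGamma_div_Gamma_div_log {s c : ℝ} (hs : 0 < s) (hc : 0 < c) :
    Tendsto (fun ρ : ℝ => -log (lowerGamma s (c / √ρ) / Gamma s) / log ρ) atTop (𝓝 (s / 2)) := by
  refine tendsto_div_log_of_abs_sub_mul_log_le
    (B := |log (Gamma s) - s * log c + log s| + c) ?_
  filter_upwards [eventually_ge_atTop 1] with ρ hρ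
  have hsqrt : 0 < √ρ := sqrt_pos.2 (by linarith)
  have hu : 0 < c / √ρ := div_pos hc hsqrt
  have hlogu : log (c / √ρ) = log c - log ρ / 2 := by
    rw [log_div hc.ne' hsqrt.ne', log_sqrt (by linarith)]
  have hdev := abs_log_lowerGamma_sub_le hs hu
  rw [hlogu] at hdev
  have hsmall : c / √ρ ≤ c := div_le_self hc.le (one_le_sqrt.2 hρ)
  rw [log_div (lowerGamma_pos hs hu).ne' (Gamma_pos_of_pos hs).ne']
  calc |-(log (lowerGamma s (c / √ρ)) - log (Gamma s)) - s / 2 * log ρ|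
      = |(log (Gamma s) - s * log c + log s)
          - (log (lowerGamma s (c / √ρ)) - (s * (log c - log ρ / 2) - log s))| := by
        congr 1; ring
    _ ≤ |log (Gamma s) - s * log c + log s| + c :=
        (abs_sub _ _).trans (by gcongr; exact hdev.trans hsmall)

/-- Remark 2 (second part): for `s > 0` and `c > 0`,
`lim_{ρ→∞} -log(γ(s, c/√ρ)/Γ(s)) / log ρ = s/2`.  In particular, taking
`s = α+1 = π²M/(16-π²)` for a positive integer `M`, the secrecy diversity order of the
backscatter signal with perfect SIC equals `Mπ²/(2(16-π²))`. -/
theorem secrecy_diversity_order_backscatter_pSIC (s c : ℝ) (hs : 0 < s) (hc : 0 < c) :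
    Tendsto (fun ρ : ℝ =>
        -Real.log (lowerGamma s (c / Real.sqrt ρ) / Real.Gamma s) / Real.log ρ)
      atTop (nhds (s / 2)) ∧
    ∀ M : ℕ, 0 < M →
      Tendsto (fun ρ : ℝ =>
          -Real.log (lowerGamma (π ^ 2 * M / (16 - π ^ 2)) (c / Real.sqrt ρ) /
              Real.Gamma (π ^ 2 * M / (16 - π ^ 2))) / Real.log ρ)
        atTop (nhds (M * π ^ 2 / (2 * (16 - π ^ 2)))) := by
  refine ⟨tendsto_neg_log_lowerGamma_div_Gamma_div_log hs hc, fun M hM => ?_⟩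
  have hπ : 0 < 16 - π ^ 2 := by nlinarith [pi_lt_d2, pi_pos]
  have hα : 0 < π ^ 2 * M / (16 - π ^ 2) := by positivity
  convert tendsto_neg_log_lowerGamma_div_Gamma_div_log hα hc using 2
  field_simp
end
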